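/- arXiv:2505.22828 — 2 statements merged into one kernel-verified Lean document; each statement's English description precedes it below -/
import Mathlib

section
/- For every conjugacy class C of the symmetric group S_n with C ≠ {identity}, there exists a permutation π ∈ C with exactly one descent, i.e., min over π ∈ C of des(π) equals 1. -/
/-- Descent number: number of positions `i` (0-indexed, `i+1 < n`) with `π(i) > π(i+1)`. -/
def des {n : ℕ} (π : Equiv.Perm (Fin n)) : ℕ :=
  (Finset.univ.filter (fun i : Fin (n - 1) =>
    π ⟨i.1 + 1, by have := i.2; omega⟩ < π ⟨i.1, by have := i.2; omega⟩)).card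

/-- Cyclic descent number: positions taken cyclically, with `π(n+1) := π(1)`. -/
def cdes {n : ℕ} (π : Equiv.Perm (Fin n)) : ℕ :=
  (Finset.univ.filter (fun i : Fin n =>
    π ⟨(i.1 + 1) % n, Nat.mod_lt _ (by have := i.2; omega)⟩ < π i)).card

namespace MinDesAux

/-! ### ℕ-level combinatorics of the chain construction -/

def cjf (L : List ℕ) (j : ℕ) : ℕ := L.getD j 0

def kf (L : List ℕ) (t : ℕ) : ℕ :=
  ((Finset.range L.length).filter (fun j => cjf L 0 - t ≤ cjf L j)).card

def Pf (L : List ℕ) (t : ℕ) : ℕ := ∑ s ∈ Finset.range t, kf L s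

def chainL (L : List ℕ) (j : ℕ) : List ℕ :=
  (List.range (cjf L j)).map (fun u => Pf L (cjf L 0 - cjf L j + u) + j)

lemma kf_le_len (L : List ℕ) (t : ℕ) : kf L t ≤ L.length := by
  classical
  calc kf L t ≤ (Finset.range L.length).card := Finset.card_filter_le _ _
  _ = L.length := Finset.card_range _

lemma kf_mono (L : List ℕ) {t1 t2 : ℕ} (h : t1 ≤ t2) : kf L t1 ≤ kf L t2 := by
  apply Finset.card_le_card
  intro j hj
  simp only [Finset.mem_filter, Finset.mem_range] at hj ⊢
  refine ⟨hj.1, le_trans ?_ hj.2⟩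
  omega

lemma Pf_zero (L : List ℕ) : Pf L 0 = 0 := rfl

lemma Pf_succ (L : List ℕ) (t : ℕ) : Pf L (t + 1) = Pf L t + kf L t :=
  Finset.sum_range_succ _ _

lemma Pf_mono (L : List ℕ) {t1 t2 : ℕ} (h : t1 ≤ t2) : Pf L t1 ≤ Pf L t2 := by
  apply Finset.sum_le_sum_of_subset
  exact Finset.range_subset_range.2 h

section withHyp

variable {L : List ℕ} (hL2 : ∀ x ∈ L, 2 ≤ x) (hsort : L.Pairwise (fun a b => b ≤ a))

include hL2 in
lemma cjf_two {j : ℕ} (hj : j < L.length) : 2 ≤ cjf L j := by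
  have : L.getD j 0 = L[j] := List.getD_eq_getElem L 0 hj
  rw [cjf, this]
  exact hL2 _ (List.getElem_mem _)

include hL2 hsort in
lemma cjf_anti {i j : ℕ} (hij : i ≤ j) : cjf L j ≤ cjf L i := by
  by_cases hj : j < L.length
  · have hi : i < L.length := lt_of_le_of_lt hij hj
    rcases eq_or_lt_of_le hij with rfl | hlt
    · exact le_refl _
    · have := List.pairwise_iff_getElem.1 hsort i j hi hj hlt
      rw [cjf, cjf, List.getD_eq_getElem L 0 hj, List.getD_eq_getElem L 0 hi]
      exact this
  · rw [cjf, List.getD_eq_default L 0 (by omega)]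
    exact Nat.zero_le _

include hL2 hsort in
lemma kf_act (t j : ℕ) : j < kf L t ↔ (j < L.length ∧ cjf L 0 - t ≤ cjf L j) := by
  classical
  constructor
  · intro h
    have hlen : j < L.length := lt_of_lt_of_le h (kf_le_len L t)
    refine ⟨hlen, ?_⟩
    by_contra hlt
    push_neg at hlt
    have hsub : (Finset.range L.length).filter (fun i => cjf L 0 - t ≤ cjf L i)
        ⊆ Finset.range j := by
      intro i hi
      simp only [Finset.mem_filter, Finset.mem_range] at hi ⊢
      by_contra hij
      push_neg at hij
      have := cjf_anti hL2 hsort hij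
      omega
    have := Finset.card_le_card hsub
    rw [Finset.card_range] at this
    rw [kf] at h
    omega
  · rintro ⟨hjr, hcj⟩
    have hsub : Finset.range (j + 1) ⊆
        (Finset.range L.length).filter (fun i => cjf L 0 - t ≤ cjf L i) := by
      intro i hi
      simp only [Finset.mem_range] at hi
      simp only [Finset.mem_filter, Finset.mem_range]
      have hij : i ≤ j := by omega
      exact ⟨by omega, le_trans hcj (cjf_anti hL2 hsort hij)⟩
    have := Finset.card_le_card hsub
    rw [Finset.card_range] at this
    rw [kf]
    omega

include hL2 hsort in
lemma kf_pos (hr : L ≠ []) (t : ℕ) : 0 < kf L t := by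
  refine (kf_act hL2 hsort t 0).2 ⟨?_, ?_⟩
  · exact List.length_pos_iff.2 hr
  · exact Nat.sub_le _ _

include hL2 hsort in
lemma Pf_strict (hr : L ≠ []) {t1 t2 : ℕ} (h : t1 < t2) : Pf L t1 < Pf L t2 := by
  have h1 : Pf L (t1 + 1) ≤ Pf L t2 := Pf_mono L (by omega)
  have h2 : Pf L (t1 + 1) = Pf L t1 + kf L t1 := Pf_succ L t1
  have := kf_pos hL2 hsort hr t1
  omega

lemma sum_getD_range : ∀ (l : List ℕ), ∑ j ∈ Finset.range l.length, l.getD j 0 = l.sum := by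
  intro l
  induction l with
  | nil => simp
  | cons a l ih =>
    rw [List.length_cons, Finset.sum_range_succ']
    simp only [List.getD_cons_succ, List.getD_cons_zero, List.sum_cons]
    omega

lemma map_getD_range : ∀ (l : List ℕ), (List.range l.length).map (fun j => l.getD j 0) = l := by
  intro l
  induction l with
  | nil => simp
  | cons a l ih =>
    rw [List.length_cons, List.range_succ_eq_map, List.map_cons, List.map_map]
    simp only [List.getD_cons_zero]
    have hcg : (List.range l.length).map ((fun j => (a :: l).getD j 0) ∘ Nat.succ)
        = (List.range l.length).map (fun j => l.getD j 0) := by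
      apply List.map_congr_left
      intro j _
      simp [List.getD_cons_succ]
    rw [hcg, ih]

include hL2 hsort in
lemma Pf_top : Pf L (cjf L 0) = L.sum := by
  classical
  have hkt : ∀ t, kf L t = ∑ j ∈ Finset.range L.length,
      if cjf L 0 - t ≤ cjf L j then 1 else 0 := fun t => Finset.card_filter _ _
  calc Pf L (cjf L 0)
      = ∑ t ∈ Finset.range (cjf L 0), ∑ j ∈ Finset.range L.length,
          if cjf L 0 - t ≤ cjf L j then 1 else 0 := Finset.sum_congr rfl (fun t _ => hkt t)
    _ = ∑ j ∈ Finset.range L.length, ∑ t ∈ Finset.range (cjf L 0),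
          if cjf L 0 - t ≤ cjf L j then 1 else 0 := Finset.sum_comm
    _ = ∑ j ∈ Finset.range L.length, cjf L j := by
        apply Finset.sum_congr rfl
        intro j hj
        rw [← Finset.card_filter]
        have hcT : cjf L j ≤ cjf L 0 := cjf_anti hL2 hsort (Nat.zero_le j)
        have : (Finset.range (cjf L 0)).filter (fun t => cjf L 0 - t ≤ cjf L j)
            = Finset.Ico (cjf L 0 - cjf L j) (cjf L 0) := by
          ext t
          simp only [Finset.mem_filter, Finset.mem_range, Finset.mem_Ico]
          omega
        rw [this, Nat.card_Ico]
        omega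
    _ = L.sum := sum_getD_range L

include hL2 hsort in
lemma Pf_decode : ∀ (N : ℕ) (i : ℕ), i < Pf L N →
    ∃ t, t < N ∧ Pf L t ≤ i ∧ i < Pf L (t + 1) := by
  intro N
  induction N with
  | zero => intro i hi; rw [Pf_zero] at hi; omega
  | succ N ih =>
    intro i hi
    by_cases h : i < Pf L N
    · obtain ⟨t, ht, h1, h2⟩ := ih i h
      exact ⟨t, by omega, h1, h2⟩
    · exact ⟨N, by omega, by omega, hi⟩

include hL2 hsort in
lemma chainL_bound {j : ℕ} (hj : j < L.length) :
    ∀ x ∈ chainL L j, x < Pf L (cjf L 0) := by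
  intro x hx
  rw [chainL] at hx
  simp only [List.mem_map, List.mem_range] at hx
  obtain ⟨u, hu, rfl⟩ := hx
  have hcT : cjf L j ≤ cjf L 0 := cjf_anti hL2 hsort (Nat.zero_le j)
  have hc2 : 2 ≤ cjf L j := cjf_two hL2 hj
  have ht : cjf L 0 - cjf L j + u < cjf L 0 := by omega
  have hact : j < kf L (cjf L 0 - cjf L j + u) :=
    (kf_act hL2 hsort _ j).2 ⟨hj, by omega⟩
  have h1 : Pf L (cjf L 0 - cjf L j + u) + j
      < Pf L (cjf L 0 - cjf L j + u + 1) := by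
    rw [Pf_succ]; omega
  have h2 : Pf L (cjf L 0 - cjf L j + u + 1) ≤ Pf L (cjf L 0) := Pf_mono L (by omega)
  omega

include hL2 hsort in
lemma chainL_mem_act {j : ℕ} (hj : j < L.length) {x : ℕ} (hx : x ∈ chainL L j) :
    ∃ t, t < cjf L 0 ∧ j < kf L t ∧ x = Pf L t + j := by
  rw [chainL] at hx
  simp only [List.mem_map, List.mem_range] at hx
  obtain ⟨u, hu, rfl⟩ := hx
  have hcT : cjf L j ≤ cjf L 0 := cjf_anti hL2 hsort (Nat.zero_le j)
  refine ⟨cjf L 0 - cjf L j + u, by omega, ?_, rfl⟩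
  exact (kf_act hL2 hsort _ j).2 ⟨hj, by omega⟩

include hL2 hsort in
lemma chainL_pairwise (hr : L ≠ []) (j : ℕ) : (chainL L j).Pairwise (· < ·) := by
  rw [chainL]
  rw [List.pairwise_map]
  apply List.Pairwise.imp_of_mem ?_ List.pairwise_lt_range
  intro a b ha hb hab
  have : Pf L (cjf L 0 - cjf L j + a) < Pf L (cjf L 0 - cjf L j + b) :=
    Pf_strict hL2 hsort hr (by omega)
  omega

include hL2 hsort in
lemma chainL_disjoint (hr : L ≠ []) {j1 j2 : ℕ} (h12 : j1 < j2) (h2r : j2 < L.length) :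
    List.Disjoint (chainL L j1) (chainL L j2) := by
  intro x hx1 hx2
  obtain ⟨t1, ht1, hk1, he1⟩ := chainL_mem_act hL2 hsort (lt_trans h12 h2r) hx1
  obtain ⟨t2, ht2, hk2, he2⟩ := chainL_mem_act hL2 hsort h2r hx2
  have hb1 : x < Pf L (t1 + 1) := by rw [Pf_succ]; omega
  have hb2 : x < Pf L (t2 + 1) := by rw [Pf_succ]; omega
  rcases lt_trichotomy t1 t2 with h | h | h
  · have : Pf L (t1 + 1) ≤ Pf L t2 := Pf_mono L (by omega)
    omega
  · subst h; omega
  · have : Pf L (t2 + 1) ≤ Pf L t1 := Pf_mono L (by omega)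
    omega

end withHyp

/-! ### Generic evaluation of products of formPerms of disjoint lists -/

lemma prod_formPerm_apply_of_forall_not_mem {α : Type*} [DecidableEq α] :
    ∀ (ls : List (List α)) (x : α), (∀ l ∈ ls, x ∉ l) →
      (ls.map List.formPerm).prod x = x := by
  intro ls
  induction ls with
  | nil => intro x _; simp
  | cons a t ih =>
    intro x hx
    simp only [List.map_cons, List.prod_cons, Equiv.Perm.mul_apply]
    rw [ih x (fun l hl => hx l (List.mem_cons_of_mem _ hl)),
      List.formPerm_apply_of_notMem (hx a List.mem_cons_self)]

lemma prod_formPerm_apply_of_mem {α : Type*} [DecidableEq α] :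
    ∀ (ls : List (List α)), ls.Pairwise List.Disjoint →
      ∀ l ∈ ls, ∀ x ∈ l, (ls.map List.formPerm).prod x = l.formPerm x := by
  intro ls
  induction ls with
  | nil => intro _ l hl; simp at hl
  | cons a t ih =>
    intro hpw l hl x hx
    obtain ⟨ha, ht⟩ := List.pairwise_cons.1 hpw
    simp only [List.map_cons, List.prod_cons, Equiv.Perm.mul_apply]
    rcases List.mem_cons.1 hl with rfl | hl'
    · rw [prod_formPerm_apply_of_forall_not_mem t x (fun l' hl' => ha l' hl' hx)]
    · rw [ih ht l hl' x hx]
      have h1 : l.formPerm x ∈ l := List.formPerm_apply_mem_of_mem hx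
      exact List.formPerm_apply_of_notMem (fun hmem => (ha l hl') hmem h1)

/-! ### Fin-level construction -/

def embF {n : ℕ} (hn : 0 < n) (x : ℕ) : Fin n :=
  if h : x < n then ⟨x, h⟩ else ⟨0, hn⟩

lemma embF_val {n : ℕ} (hn : 0 < n) {x : ℕ} (h : x < n) : (embF hn x).val = x := by
  simp [embF, h]

def chainF {n : ℕ} (hn : 0 < n) (L : List ℕ) (j : ℕ) : List (Fin n) :=
  (chainL L j).map (embF hn)

/-- Key lemma: a permutation with a given nontrivial cycle type and at most one descent. -/
lemma exists_tau (n : ℕ) (c : Multiset ℕ) (h2 : ∀ x ∈ c, 2 ≤ x)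
    (hsum : c.sum ≤ n) (hc : c ≠ 0) :
    ∃ τ : Equiv.Perm (Fin n), τ.cycleType = c ∧ des τ ≤ 1 := by
  classical
  set L : List ℕ := (Multiset.sort c (· ≤ ·)).reverse with hLdef
  have hLc : (↑L : Multiset ℕ) = c := by
    rw [hLdef, Multiset.coe_reverse, Multiset.sort_eq]
  have hL2 : ∀ x ∈ L, 2 ≤ x := by
    intro x hx
    apply h2
    rw [← hLc]
    exact hx
  have hsort : L.Pairwise (fun a b => b ≤ a) := by
    rw [hLdef, List.pairwise_reverse]
    exact Multiset.pairwise_sort c (· ≤ ·)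
  have hr : L ≠ [] := by
    intro h
    apply hc
    rw [← hLc, h]
    rfl
  have hlen : 0 < L.length := List.length_pos_iff.2 hr
  have hLsum : L.sum = c.sum := by
    conv_rhs => rw [← hLc]
    simp
  have hT2 : 2 ≤ cjf L 0 := cjf_two hL2 hlen
  have hmsum : Pf L (cjf L 0) = c.sum := by rw [Pf_top hL2 hsort]; exact hLsum
  have hmn : Pf L (cjf L 0) ≤ n := by rw [hmsum]; exact hsum
  have hm0 : 0 < Pf L (cjf L 0) := by
    have := Pf_strict hL2 hsort hr (show 0 < cjf L 0 by omega)
    rw [Pf_zero] at this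
    exact this
  have hn : 0 < n := lt_of_lt_of_le hm0 hmn
  -- basic chain facts
  have hanti : ∀ {i j : ℕ}, i ≤ j → cjf L j ≤ cjf L i := fun h => cjf_anti hL2 hsort h
  have hkact : ∀ t j, j < kf L t ↔ (j < L.length ∧ cjf L 0 - t ≤ cjf L j) :=
    kf_act hL2 hsort
  have hbnd : ∀ j, j < L.length → ∀ x ∈ chainL L j, x < n := fun j hj x hx =>
    lt_of_lt_of_le (chainL_bound hL2 hsort hj x hx) hmn
  have hCFlen : ∀ j, (chainF hn L j).length = cjf L j := by
    intro j
    simp [chainF, chainL]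
  have hCFnodup : ∀ j, j < L.length → (chainF hn L j).Nodup := by
    intro j hj
    apply List.Nodup.map_on
    · intro x hx y hy hxy
      have := congrArg Fin.val hxy
      rwa [embF_val hn (hbnd _ hj _ hx), embF_val hn (hbnd _ hj _ hy)] at this
    · exact (chainL_pairwise hL2 hsort hr j).imp (fun h => Nat.ne_of_lt h)
  have hCFdisj : ∀ j1 j2, j1 < j2 → j2 < L.length →
      List.Disjoint (chainF hn L j1) (chainF hn L j2) := by
    intro j1 j2 h12 h2r y hy1 hy2
    obtain ⟨x1, hx1, he1⟩ := List.mem_map.1 hy1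
    obtain ⟨x2, hx2, he2⟩ := List.mem_map.1 hy2
    have hvv : x1 = x2 := by
      have := congrArg Fin.val (he1.trans he2.symm)
      rwa [embF_val hn (hbnd _ (lt_trans h12 h2r) _ hx1), embF_val hn (hbnd _ h2r _ hx2)]
        at this
    exact chainL_disjoint hL2 hsort hr h12 h2r (hvv ▸ hx1) hx2
  have hCFval : ∀ j, j < L.length → ∀ y ∈ chainF hn L j, y.val < Pf L (cjf L 0) := by
    intro j hj y hy
    obtain ⟨x, hx, rfl⟩ := List.mem_map.1 hy
    rw [embF_val hn (hbnd j hj x hx)]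
    exact chainL_bound hL2 hsort hj x hx
  set τ : Equiv.Perm (Fin n) :=
    (((List.range L.length).map (chainF hn L)).map List.formPerm).prod with hτdef
  have hpw : ((List.range L.length).map (chainF hn L)).Pairwise List.Disjoint := by
    rw [List.pairwise_map]
    apply List.Pairwise.imp_of_mem ?_ List.pairwise_lt_range
    intro a b ha hb hab
    exact hCFdisj a b hab (List.mem_range.1 hb)
  have heval : ∀ j, j < L.length → ∀ x ∈ chainF hn L j,
      τ x = (chainF hn L j).formPerm x := by
    intro j hj x hx
    exact prod_formPerm_apply_of_mem _ hpw _
      (List.mem_map_of_mem (List.mem_range.2 hj)) x hx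
  have heval0 : ∀ x : Fin n, (∀ j, j < L.length → x ∉ chainF hn L j) → τ x = x := by
    intro x hx
    apply prod_formPerm_apply_of_forall_not_mem
    intro l hl
    obtain ⟨j, hj, rfl⟩ := List.mem_map.1 hl
    exact hx j (List.mem_range.1 hj)
  -- getElem description of chainF
  have hCLget : ∀ j u (hu : u < cjf L j),
      (chainL L j)[u]'(by simp [chainL]; exact hu) =
        Pf L (cjf L 0 - cjf L j + u) + j := by
    intro j u hu
    simp [chainL]
  have hCFget : ∀ j u (hu : u < cjf L j),
      (chainF hn L j)[u]'(by rw [hCFlen]; exact hu) =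
        embF hn (Pf L (cjf L 0 - cjf L j + u) + j) := by
    intro j u hu
    simp [chainF, chainL]
  -- formPerm on a chain
  have hstep : ∀ j, j < L.length → ∀ u, u < cjf L j →
      (chainF hn L j).formPerm (embF hn (Pf L (cjf L 0 - cjf L j + u) + j)) =
        embF hn (Pf L (cjf L 0 - cjf L j + ((u + 1) % cjf L j)) + j) := by
    intro j hj u hu
    have h1 := hCFget j u hu
    have h2 := hCFget j ((u + 1) % cjf L j) (Nat.mod_lt _ (by omega))
    rw [← h1, ← h2]
    have h3 := List.formPerm_apply_getElem _ (hCFnodup j hj) u (by rw [hCFlen]; exact hu)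
    simp only [hCFlen] at h3 ⊢
    exact h3
  -- membership of a decoded point in its chain
  have hmemF : ∀ t j, t < cjf L 0 → j < kf L t →
      embF hn (Pf L t + j) ∈ chainF hn L j := by
    intro t j ht hjk
    obtain ⟨hjr, hact⟩ := (hkact t j).1 hjk
    have hcT : cjf L j ≤ cjf L 0 := hanti (Nat.zero_le j)
    have hu : t - (cjf L 0 - cjf L j) < cjf L j := by omega
    have := hCFget j (t - (cjf L 0 - cjf L j)) hu
    rw [show cjf L 0 - cjf L j + (t - (cjf L 0 - cjf L j)) = t from by omega] at this
    rw [← this]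
    exact List.getElem_mem _
  -- value of τ at a decoded point
  have htauval : ∀ t j, t < cjf L 0 → j < kf L t →
      τ (embF hn (Pf L t + j)) =
        embF hn (Pf L (if t + 1 < cjf L 0 then t + 1 else cjf L 0 - cjf L j) + j) := by
    intro t j ht hjk
    obtain ⟨hjr, hact⟩ := (hkact t j).1 hjk
    have hcT : cjf L j ≤ cjf L 0 := hanti (Nat.zero_le j)
    have hc2' : 2 ≤ cjf L j := cjf_two hL2 hjr
    have hu : t - (cjf L 0 - cjf L j) < cjf L j := by omega
    have hts : cjf L 0 - cjf L j + (t - (cjf L 0 - cjf L j)) = t := by omega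
    have hmem := hmemF t j ht hjk
    rw [heval j hjr _ hmem]
    have := hstep j hjr (t - (cjf L 0 - cjf L j)) hu
    rw [hts] at this
    rw [this]
    have harg : cjf L 0 - cjf L j + ((t - (cjf L 0 - cjf L j) + 1) % cjf L j)
        = (if t + 1 < cjf L 0 then t + 1 else cjf L 0 - cjf L j) := by
      by_cases hlast : t + 1 < cjf L 0
      · rw [if_pos hlast, Nat.mod_eq_of_lt (by omega)]
        omega
      · rw [if_neg hlast, show t - (cjf L 0 - cjf L j) + 1 = cjf L j from by omega,
          Nat.mod_self]
        omega
    rw [harg]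
  -- values of τ stay in the support zone
  have hzone : ∀ x : Fin n, x.val < Pf L (cjf L 0) →
      ∃ t j, t < cjf L 0 ∧ j < kf L t ∧ x.val = Pf L t + j ∧ x = embF hn (Pf L t + j) := by
    intro x hx
    obtain ⟨t, ht, ha, hb⟩ := Pf_decode hL2 hsort (cjf L 0) x.val hx
    rw [Pf_succ] at hb
    refine ⟨t, x.val - Pf L t, ht, by omega, by omega, ?_⟩
    apply Fin.ext
    rw [embF_val hn (by omega)]
    omega
  have hfix : ∀ x : Fin n, Pf L (cjf L 0) ≤ x.val → τ x = x := by
    intro x hx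
    apply heval0
    intro j hj hmem
    have := hCFval j hj x hmem
    omega
  -- τ maps the support zone to itself
  have hzoneval : ∀ x : Fin n, x.val < Pf L (cjf L 0) → (τ x).val < Pf L (cjf L 0) := by
    intro x hx
    obtain ⟨t, j, ht, hjk, hxv, hxe⟩ := hzone x hx
    obtain ⟨hjr, hact⟩ := (hkact t j).1 hjk
    have hmem := hmemF t j ht hjk
    rw [hxe, heval j hjr _ hmem]
    exact hCFval j hjr _ (List.formPerm_apply_mem_of_mem hmem)
  -- the key single-descent property
  have hkey : ∀ (x : ℕ) (hx1 : x + 1 < n),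
      (τ ⟨x + 1, hx1⟩).val < (τ ⟨x, by omega⟩).val → x = Pf L (cjf L 0 - 1) - 1 := by
    intro x hx1 hlt
    by_cases hxm : Pf L (cjf L 0) ≤ x
    · rw [hfix ⟨x, by omega⟩ hxm, hfix ⟨x + 1, hx1⟩ (by simpa using le_trans hxm (by omega))]
        at hlt
      simp at hlt
    · push_neg at hxm
      obtain ⟨t, j, ht, hjk, hxv, hxe⟩ := hzone ⟨x, by omega⟩ (by simpa using hxm)
      simp only at hxv
      obtain ⟨hjr, hact⟩ := (hkact t j).1 hjk
      have hcT : cjf L j ≤ cjf L 0 := hanti (Nat.zero_le j)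
      have hc2' : 2 ≤ cjf L j := cjf_two hL2 hjr
      have hτx := htauval t j ht hjk
      rw [← hxe] at hτx
      by_cases hx1m : x + 1 < Pf L (cjf L 0)
      · obtain ⟨t', j', ht', hjk', hxv', hxe'⟩ := hzone ⟨x + 1, hx1⟩ (by simpa using hx1m)
        simp only at hxv'
        have hτx1 := htauval t' j' ht' hjk'
        rw [← hxe'] at hτx1
        -- identify (t', j')
        have hk_t : Pf L t ≤ x ∧ x < Pf L t + kf L t := ⟨by omega, by omega⟩
        have hk_t' : Pf L t' ≤ x + 1 ∧ x + 1 < Pf L t' + kf L t' := ⟨by omega, by omega⟩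
        have htt' : t ≤ t' := by
          by_contra hcon
          push_neg at hcon
          have : Pf L (t' + 1) ≤ Pf L t := Pf_mono L (by omega)
          rw [Pf_succ] at this
          omega
        have htt'2 : t' ≤ t + 1 := by
          by_contra hcon
          push_neg at hcon
          have h5 : Pf L (t + 1) < Pf L t' := Pf_strict hL2 hsort hr (by omega)
          rw [Pf_succ] at h5
          omega
        -- compare values
        have hvx := congrArg Fin.val hτx
        have hvx1 := congrArg Fin.val hτx1
        have hb1 : Pf L (if t + 1 < cjf L 0 then t + 1 else cjf L 0 - cjf L j) + j < n := by
          split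
          · have h1 : j < kf L (t + 1) := lt_of_lt_of_le hjk (kf_mono L (by omega))
            have h2 : Pf L (t + 1) + kf L (t + 1) = Pf L (t + 1 + 1) := (Pf_succ L _).symm
            have h3 : Pf L (t + 1 + 1) ≤ Pf L (cjf L 0) := Pf_mono L (by omega)
            omega
          · have h1 : j < kf L (cjf L 0 - cjf L j) :=
              (hkact _ j).2 ⟨hjr, by omega⟩
            have h2 : Pf L (cjf L 0 - cjf L j) + kf L (cjf L 0 - cjf L j)
                = Pf L (cjf L 0 - cjf L j + 1) := (Pf_succ L _).symm
            have h3 : Pf L (cjf L 0 - cjf L j + 1) ≤ Pf L (cjf L 0) := Pf_mono L (by omega)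
            omega
        have hb2 : Pf L (if t' + 1 < cjf L 0 then t' + 1 else cjf L 0 - cjf L j') + j' < n := by
          split
          · have h1 : j' < kf L (t' + 1) := lt_of_lt_of_le hjk' (kf_mono L (by omega))
            have h2 : Pf L (t' + 1) + kf L (t' + 1) = Pf L (t' + 1 + 1) := (Pf_succ L _).symm
            have h3 : Pf L (t' + 1 + 1) ≤ Pf L (cjf L 0) := Pf_mono L (by omega)
            omega
          · obtain ⟨hjr', _⟩ := (hkact t' j').1 hjk'
            have h1 : j' < kf L (cjf L 0 - cjf L j') :=
              (hkact _ j').2 ⟨hjr', by omega⟩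
            have h2 : Pf L (cjf L 0 - cjf L j') + kf L (cjf L 0 - cjf L j')
                = Pf L (cjf L 0 - cjf L j' + 1) := (Pf_succ L _).symm
            have h3 : Pf L (cjf L 0 - cjf L j' + 1) ≤ Pf L (cjf L 0) := Pf_mono L (by omega)
            omega
        rw [embF_val hn hb1] at hvx
        rw [embF_val hn hb2] at hvx1
        rw [hvx, hvx1] at hlt
        -- now case analysis
        rcases eq_or_lt_of_le htt' with rfl | htlt
        · -- same round: j' = j + 1
          have hjj' : j' = j + 1 := by omega
          subst hjj'
          by_cases hlast : t + 1 < cjf L 0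
          · rw [if_pos hlast, if_pos hlast] at hlt
            omega
          · rw [if_neg hlast, if_neg hlast] at hlt
            obtain ⟨hjr', hact'⟩ := (hkact t (j+1)).1 hjk'
            have hc1 : cjf L (j + 1) ≤ cjf L j := hanti (by omega)
            have : Pf L (cjf L 0 - cjf L j) ≤ Pf L (cjf L 0 - cjf L (j + 1)) :=
              Pf_mono L (by omega)
            omega
        · -- t' = t + 1, j' = 0 case, i.e. round boundary
          have ht'' : t' = t + 1 := by omega
          subst ht''
          have hj'0 : Pf L (t + 1) = x + 1 := by
            have : Pf L (t + 1) = Pf L t + kf L t := Pf_succ L t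
            omega
          have hj'v : j' = 0 := by omega
          subst hj'v
          have hlast : t + 1 < cjf L 0 := ht'
          rw [if_pos hlast] at hlt
          by_cases hlast2 : t + 1 + 1 < cjf L 0
          · rw [if_pos hlast2] at hlt
            have h1 : Pf L (t + 1 + 1) = Pf L (t + 1) + kf L (t + 1) := Pf_succ L _
            have h2 : kf L t ≤ kf L (t + 1) := kf_mono L (by omega)
            omega
          · -- this is the descent position
            have hteq : t + 1 = cjf L 0 - 1 := by omega
            rw [hteq] at hj'0
            omega
      · -- x + 1 = Pf L (cjf L 0), fixed zone starts
        push_neg at hx1m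
        have hfx1 : τ ⟨x + 1, hx1⟩ = ⟨x + 1, hx1⟩ := hfix _ (by simpa using hx1m)
        rw [hfx1] at hlt
        have := hzoneval ⟨x, by omega⟩ (by simpa using hxm)
        simp only at this hlt
        omega
  -- conclusion: des τ ≤ 1
  have hdes : des τ ≤ 1 := by
    rw [des]
    rw [Finset.card_le_one]
    intro a ha b hb
    have hpa := (Finset.mem_filter.1 ha).2
    have hpb := (Finset.mem_filter.1 hb).2
    have ha2 : a.1 + 1 < n := by have := a.2; omega
    have hb2 : b.1 + 1 < n := by have := b.2; omega
    have hva : a.1 = Pf L (cjf L 0 - 1) - 1 := hkey a.1 ha2 (Fin.lt_def.1 hpa)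
    have hvb : b.1 = Pf L (cjf L 0 - 1) - 1 := hkey b.1 hb2 (Fin.lt_def.1 hpb)
    apply Fin.ext
    rw [hva, hvb]
  -- cycle type
  have hct : τ.cycleType = c := by
    have h1 : ∀ σ ∈ ((List.range L.length).map (chainF hn L)).map List.formPerm,
        σ.IsCycle := by
      intro σ hσ
      obtain ⟨l, hl, rfl⟩ := List.mem_map.1 hσ
      obtain ⟨j, hj, rfl⟩ := List.mem_map.1 hl
      have hjr := List.mem_range.1 hj
      exact List.isCycle_formPerm (hCFnodup j hjr)
        (by rw [hCFlen]; exact cjf_two hL2 hjr)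
    have h2 : (((List.range L.length).map (chainF hn L)).map List.formPerm).Pairwise
        Equiv.Perm.Disjoint := by
      rw [List.pairwise_map, List.pairwise_map]
      apply List.Pairwise.imp_of_mem ?_ List.pairwise_lt_range
      intro a b ha hb hab
      have har := List.mem_range.1 ha
      have hbr := List.mem_range.1 hb
      exact (List.formPerm_disjoint_iff (hCFnodup a har) (hCFnodup b hbr)
        (by rw [hCFlen]; exact cjf_two hL2 har)
        (by rw [hCFlen]; exact cjf_two hL2 hbr)).2 (hCFdisj a b hab hbr)
    rw [Equiv.Perm.cycleType_eq _ hτdef.symm h1 h2]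
    have : (((List.range L.length).map (chainF hn L)).map List.formPerm).map
        (Finset.card ∘ Equiv.Perm.support) = (List.range L.length).map (fun j => cjf L j) := by
      rw [List.map_map, List.map_map]
      apply List.map_congr_left
      intro j hj
      have hjr := List.mem_range.1 hj
      simp only [Function.comp_apply]
      rw [List.support_formPerm_of_nodup _ (hCFnodup j hjr), List.toFinset_card_of_nodup
        (hCFnodup j hjr), hCFlen]
      intro x hx
      have := hCFlen j
      rw [hx] at this
      simp at this
      have := cjf_two hL2 hjr
      omega
    rw [this]
    rw [show (List.range L.length).map (fun j => cjf L j) = L from map_getD_range L]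
    exact hLc
  exact ⟨τ, hct, hdes⟩

/-- A permutation of `Fin n` with no descent is the identity. -/
lemma eq_one_of_des_eq_zero {n : ℕ} {τ : Equiv.Perm (Fin n)} (h : des τ = 0) : τ = 1 := by
  classical
  have hempty := Finset.card_eq_zero.1 h
  have hadj : ∀ (x : ℕ) (hx : x + 1 < n), τ ⟨x, by omega⟩ < τ ⟨x + 1, hx⟩ := by
    intro x hx
    have hne : τ ⟨x, by omega⟩ ≠ τ ⟨x + 1, hx⟩ := by
      intro he
      have := τ.injective he
      simp only [Fin.mk.injEq] at this
      omega
    have hnlt : ¬ (τ ⟨x + 1, hx⟩ < τ ⟨x, by omega⟩) := by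
      intro hlt
      have hmem : (⟨x, by omega⟩ : Fin (n - 1)) ∈ Finset.univ.filter
          (fun i : Fin (n - 1) =>
            τ ⟨i.1 + 1, by have := i.2; omega⟩ < τ ⟨i.1, by have := i.2; omega⟩) := by
        rw [Finset.mem_filter]
        exact ⟨Finset.mem_univ _, hlt⟩
      rw [hempty] at hmem
      exact absurd hmem (Finset.notMem_empty _)
    rcases lt_or_eq_of_le (not_lt.1 hnlt) with h' | h'
    · exact h'
    · exact absurd h' hne
  have hmono : StrictMono τ := by
    have key : ∀ (d a : ℕ) (h : a + d + 1 < n),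
        τ ⟨a, by omega⟩ < τ ⟨a + d + 1, h⟩ := by
      intro d
      induction d with
      | zero => intro a h; exact hadj a h
      | succ d ih =>
        intro a h
        have h1 : a + d + 1 < n := by omega
        refine lt_trans (ih a h1) ?_
        exact hadj (a + d + 1) (by omega)
    intro a b hab
    rcases a with ⟨a, ha⟩
    rcases b with ⟨b, hb⟩
    have hab' : a < b := hab
    have := key (b - a - 1) a (by omega)
    have heq : (⟨a + (b - a - 1) + 1, by omega⟩ : Fin n) = ⟨b, hb⟩ := by
      apply Fin.ext
      simp only
      omega
    rwa [heq] at this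
  have hfun : (τ : Fin n → Fin n) = id := by
    have hr : Set.range (τ : Fin n → Fin n) = Set.range (id : Fin n → Fin n) := by
      rw [Set.range_id, Set.range_eq_univ.2 τ.surjective]
    exact (@StrictMono.range_inj (Fin n) (Fin n) _ _ (inferInstance : WellFoundedLT (Fin n))
      _ id hmono strictMono_id).1 hr
  apply Equiv.ext
  intro x
  exact congrFun hfun x

end MinDesAux

theorem min_des_conj_class_eq_one {n : ℕ} (π : Equiv.Perm (Fin n)) (hπ : π ≠ 1) :
    IsLeast (des '' {τ | IsConj π τ}) 1 := by
  classical
  have hc2 : ∀ x ∈ π.cycleType, 2 ≤ x := fun x hx =>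
    Equiv.Perm.two_le_of_mem_cycleType hx
  have hsum : π.cycleType.sum ≤ n := by
    rw [Equiv.Perm.sum_cycleType]
    calc π.support.card ≤ Fintype.card (Fin n) := Finset.card_le_univ _
    _ = n := Fintype.card_fin n
  have hc0 : π.cycleType ≠ 0 := by
    rw [Ne, Equiv.Perm.cycleType_eq_zero]
    exact hπ
  obtain ⟨τ, hct, hdes⟩ := MinDesAux.exists_tau n π.cycleType hc2 hsum hc0
  have hτ1 : τ ≠ 1 := by
    intro h
    rw [h, Equiv.Perm.cycleType_one] at hct
    exact hc0 hct.symm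
  have hconj : IsConj π τ := Equiv.Perm.isConj_iff_cycleType_eq.2 hct.symm
  have hdes1 : des τ = 1 := by
    have h0 : des τ ≠ 0 := fun h => hτ1 (MinDesAux.eq_one_of_des_eq_zero h)
    omega
  constructor
  · exact ⟨τ, hconj, hdes1⟩
  · rintro x ⟨σ, hσ, rfl⟩
    by_contra h
    push_neg at h
    have hσ0 : des σ = 0 := by omega
    have hσ1 : σ = 1 := MinDesAux.eq_one_of_des_eq_zero hσ0
    rw [hσ1] at hσ
    have := Equiv.Perm.isConj_iff_cycleType_eq.1 hσ
    rw [Equiv.Perm.cycleType_one] at this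
    exact hc0 this
end

section
/- Let π ∈ S_n and 1 ≤ i ≤ n-1. If {i, i+1} ∩ {π(i), π(i+1)} is nonempty, then |des(π) - des(s_i π s_i⁻¹)| ≤ 1, where s_i = (i, i+1). -/
set_option maxHeartbeats 1000000 in
lemma desCoreAux (i a b c d sa sb sc sd : ℕ) (u v w x y z : ℤ)
    (ha : a = i ∧ sa = i+1 ∨ a = i+1 ∧ sa = i ∨ a ≠ i ∧ a ≠ i+1 ∧ sa = a)
    (hb : b = i ∧ sb = i+1 ∨ b = i+1 ∧ sb = i ∨ b ≠ i ∧ b ≠ i+1 ∧ sb = b)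
    (hc : c = i ∧ sc = i+1 ∨ c = i+1 ∧ sc = i ∨ c ≠ i ∧ c ≠ i+1 ∧ sc = c)
    (hd : d = i ∧ sd = i+1 ∨ d = i+1 ∧ sd = i ∨ d ≠ i ∧ d ≠ i+1 ∧ sd = d)
    (hu : (sc < sa ∧ u = 1) ∨ (sa ≤ sc ∧ u = 0))
    (hv : (sb < sc ∧ v = 1) ∨ (sc ≤ sb ∧ v = 0))
    (hw : (sd < sb ∧ w = 1) ∨ (sb ≤ sd ∧ w = 0))
    (hx : (b < a ∧ x = 1) ∨ (a ≤ b ∧ x = 0))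
    (hy : (c < b ∧ y = 1) ∨ (b ≤ c ∧ y = 0))
    (hz : (d < c ∧ z = 1) ∨ (c ≤ d ∧ z = 0))
    (hab : a ≠ b) (hac : a ≠ c) (hbc : b ≠ c) (had : a ≠ d) (hbd : b ≠ d) (hcd : c ≠ d)
    (H : b = i ∨ b = i + 1 ∨ c = i ∨ c = i + 1)
    (eL eR : ℤ) (heL : eL = 0 ∨ eL = 1) (heR : eR = 0 ∨ eR = 1) :
    |(eL * u + v + eR * w) - (eL * x + y + eR * z)| ≤ 1 := by
  rw [abs_le]
  rcases heL with h1 | h1 <;> rcases heR with h2 | h2 <;> subst h1 h2 <;>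
    simp only [zero_mul, one_mul] <;> constructor <;> omega

lemma indSpec (x y : ℕ) :
    (x < y ∧ (if x < y then (1:ℤ) else 0) = 1) ∨ (y ≤ x ∧ (if x < y then (1:ℤ) else 0) = 0) := by
  split_ifs with h
  · exact Or.inl ⟨h, rfl⟩
  · exact Or.inr ⟨not_lt.1 h, rfl⟩

lemma swapTri {n : ℕ} (p q x : Fin n) (i : ℕ) (hp1 : p.1 = i) (hq1 : q.1 = i + 1) :
    x.1 = i ∧ (Equiv.swap p q x).1 = i+1 ∨ x.1 = i+1 ∧ (Equiv.swap p q x).1 = i ∨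
      x.1 ≠ i ∧ x.1 ≠ i+1 ∧ (Equiv.swap p q x).1 = x.1 := by
  rcases eq_or_ne x p with rfl | hxp
  · exact Or.inl ⟨hp1, by rw [Equiv.swap_apply_left, hq1]⟩
  rcases eq_or_ne x q with rfl | hxq
  · exact Or.inr (Or.inl ⟨hq1, by rw [Equiv.swap_apply_right, hp1]⟩)
  · refine Or.inr (Or.inr ⟨?_, ?_, by rw [Equiv.swap_apply_of_ne_of_ne hxp hxq]⟩)
    · intro h; exact hxp (Fin.val_injective (h.trans hp1.symm))
    · intro h; exact hxq (Fin.val_injective (h.trans hq1.symm))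

lemma swapAdjLtIff {n : ℕ} {p q : Fin n} {i : ℕ} (hp1 : p.1 = i) (hq1 : q.1 = i + 1)
    (x y : Fin n) (h1 : ¬(x = p ∧ y = q)) (h2 : ¬(x = q ∧ y = p)) :
    Equiv.swap p q x < Equiv.swap p q y ↔ x < y := by
  rcases eq_or_ne x p with hxp | hxp
  · rw [hxp, Equiv.swap_apply_left]
    rcases eq_or_ne y p with hyp | hyp
    · rw [hyp, Equiv.swap_apply_left]; simp [Fin.lt_def]
    rcases eq_or_ne y q with hyq | hyq
    · exact absurd ⟨hxp, hyq⟩ h1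
    · rw [Equiv.swap_apply_of_ne_of_ne hyp hyq]
      have h3 : y.1 ≠ i := fun h => hyp (Fin.val_injective (h.trans hp1.symm))
      have h4 : y.1 ≠ i + 1 := fun h => hyq (Fin.val_injective (h.trans hq1.symm))
      simp only [Fin.lt_def, hp1, hq1]; omega
  rcases eq_or_ne x q with hxq | hxq
  · rw [hxq, Equiv.swap_apply_right]
    rcases eq_or_ne y q with hyq | hyq
    · rw [hyq, Equiv.swap_apply_right]; simp [Fin.lt_def]
    rcases eq_or_ne y p with hyp | hyp
    · exact absurd ⟨hxq, hyp⟩ h2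
    · rw [Equiv.swap_apply_of_ne_of_ne hyp hyq]
      have h3 : y.1 ≠ i := fun h => hyp (Fin.val_injective (h.trans hp1.symm))
      have h4 : y.1 ≠ i + 1 := fun h => hyq (Fin.val_injective (h.trans hq1.symm))
      simp only [Fin.lt_def, hp1, hq1]; omega
  rw [Equiv.swap_apply_of_ne_of_ne hxp hxq]
  have h3 : x.1 ≠ i := fun h => hxp (Fin.val_injective (h.trans hp1.symm))
  have h4 : x.1 ≠ i + 1 := fun h => hxq (Fin.val_injective (h.trans hq1.symm))
  rcases eq_or_ne y p with hyp | hyp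
  · rw [hyp, Equiv.swap_apply_left]
    simp only [Fin.lt_def, hp1, hq1]; omega
  rcases eq_or_ne y q with hyq | hyq
  · rw [hyq, Equiv.swap_apply_right]
    simp only [Fin.lt_def, hp1, hq1]; omega
  · rw [Equiv.swap_apply_of_ne_of_ne hyp hyq]

lemma desEqSum {n : ℕ} (τ : Equiv.Perm (Fin n)) :
    (des τ : ℤ) = ∑ j : Fin (n - 1),
      (if τ ⟨j.1 + 1, by have := j.2; omega⟩ < τ ⟨j.1, by have := j.2; omega⟩
      then (1:ℤ) else 0) := by
  rw [des, Finset.card_filter]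
  push_cast
  rfl

lemma boundaryCore {n : ℕ} (π : Equiv.Perm (Fin n)) (p q : Fin n) (i : ℕ)
    (hp1 : p.1 = i) (hq1 : q.1 = i + 1)
    (H' : π p = p ∨ π p = q ∨ π q = p ∨ π q = q)
    (a d sa sd : ℕ) (u x w z : ℤ)
    (ha : a = i ∧ sa = i+1 ∨ a = i+1 ∧ sa = i ∨ a ≠ i ∧ a ≠ i+1 ∧ sa = a)
    (hd : d = i ∧ sd = i+1 ∨ d = i+1 ∧ sd = i ∨ d ≠ i ∧ d ≠ i+1 ∧ sd = d)
    (hu : ((Equiv.swap p q (π q)).1 < sa ∧ u = 1) ∨ (sa ≤ (Equiv.swap p q (π q)).1 ∧ u = 0))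
    (hx : ((π p).1 < a ∧ x = 1) ∨ (a ≤ (π p).1 ∧ x = 0))
    (hw : (sd < (Equiv.swap p q (π p)).1 ∧ w = 1) ∨ ((Equiv.swap p q (π p)).1 ≤ sd ∧ w = 0))
    (hz : (d < (π q).1 ∧ z = 1) ∨ ((π q).1 ≤ d ∧ z = 0))
    (hab : a ≠ (π p).1) (hac : a ≠ (π q).1) (hbd : (π p).1 ≠ d) (hcd : (π q).1 ≠ d)
    (had : a ≠ d)
    (eL eR : ℤ) (heL : eL = 0 ∨ eL = 1) (heR : eR = 0 ∨ eR = 1) :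
    |(eL * u + (if (Equiv.swap p q (π p)).1 < (Equiv.swap p q (π q)).1 then (1:ℤ) else 0) + eR * w)
      - (eL * x + (if (π q).1 < (π p).1 then (1:ℤ) else 0) + eR * z)| ≤ 1 := by
  have hpq : p ≠ q := by intro h; rw [h, hq1] at hp1; omega
  have hbc : (π p).1 ≠ (π q).1 := fun e => hpq (π.injective (Fin.val_injective e))
  have H : (π p).1 = i ∨ (π p).1 = i+1 ∨ (π q).1 = i ∨ (π q).1 = i+1 := by
    rcases H' with h|h|h|h
    · exact Or.inl (by rw [h, hp1])
    · exact Or.inr (Or.inl (by rw [h, hq1]))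
    · exact Or.inr (Or.inr (Or.inl (by rw [h, hp1])))
    · exact Or.inr (Or.inr (Or.inr (by rw [h, hq1])))
  exact desCoreAux i a (π p).1 (π q).1 d sa (Equiv.swap p q (π p)).1 (Equiv.swap p q (π q)).1 sd
    u (if (Equiv.swap p q (π p)).1 < (Equiv.swap p q (π q)).1 then (1:ℤ) else 0) w
    x (if (π q).1 < (π p).1 then (1:ℤ) else 0) z
    ha (swapTri p q (π p) i hp1 hq1) (swapTri p q (π q) i hp1 hq1) hd
    hu (indSpec _ _) hw hx (indSpec _ _) hz
    hab hac hbc had hbd hcd H eL eR heL heR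

set_option maxHeartbeats 1000000 in
theorem abs_des_sub_des_conj_le_one_of_inter_nonempty {n : ℕ} (π : Equiv.Perm (Fin n))
    (i : ℕ) (hi : i + 1 < n) :
    let p : Fin n := ⟨i, by omega⟩
    let q : Fin n := ⟨i + 1, hi⟩
    let s := Equiv.swap p q
    (({p, q} ∩ {π p, π q} : Finset (Fin n)).Nonempty) →
    |(des π : ℤ) - des (s * π * s⁻¹)| ≤ 1 := by
  intro p q s hH
  have hp1 : p.1 = i := rfl
  have hq1 : q.1 = i + 1 := rfl
  have hsdef : s = Equiv.swap p q := rfl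
  clear_value s p q
  subst hsdef
  have H' : π p = p ∨ π p = q ∨ π q = p ∨ π q = q := by
    obtain ⟨x, hx⟩ := hH
    simp only [Finset.mem_inter, Finset.mem_insert, Finset.mem_singleton] at hx
    rcases hx with ⟨h1 | h1, h2 | h2⟩ <;> subst h1
    · exact Or.inl h2.symm
    · exact Or.inr (Or.inr (Or.inl h2.symm))
    · exact Or.inr (Or.inl h2.symm)
    · exact Or.inr (Or.inr (Or.inr h2.symm))
  have hvne : ∀ x y : Fin n, x.1 ≠ y.1 → (π x).1 ≠ (π y).1 :=
    fun x y hxy e => hxy (congrArg Fin.val (π.injective (Fin.val_injective e)))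
  have hboth : ∀ x y : Fin n, x.1 ≠ i → x.1 ≠ i + 1 → y.1 ≠ i → y.1 ≠ i + 1 →
      ¬(π x = p ∧ π y = q) := by
    rintro x y hx1 hx2 hy1 hy2 ⟨u1, u2⟩
    rcases H' with h | h | h | h
    · exact hx1 (by rw [π.injective (u1.trans h.symm), hp1])
    · exact hy1 (by rw [π.injective (u2.trans h.symm), hp1])
    · exact hx2 (by rw [π.injective (u1.trans h.symm), hq1])
    · exact hy2 (by rw [π.injective (u2.trans h.symm), hq1])
  have hvan : ∀ j ∈ (Finset.univ : Finset (Fin (n-1))),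
      j ∉ Finset.univ.filter (fun j : Fin (n-1) => i - 1 ≤ j.1 ∧ j.1 ≤ i + 1) →
      ((if (Equiv.swap p q * π * (Equiv.swap p q)⁻¹) ⟨j.1 + 1, by have := j.2; omega⟩ <
            (Equiv.swap p q * π * (Equiv.swap p q)⁻¹) ⟨j.1, by have := j.2; omega⟩
          then (1:ℤ) else 0) -
        (if π ⟨j.1 + 1, by have := j.2; omega⟩ < π ⟨j.1, by have := j.2; omega⟩
          then (1:ℤ) else 0)) = 0 := by
    intro j _ hjT
    have hj : j.1 + 1 < i ∨ i + 1 < j.1 := by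
      simp only [Finset.mem_filter, Finset.mem_univ, true_and] at hjT
      omega
    have e1 : Equiv.swap p q (⟨j.1 + 1, by have := j.2; omega⟩ : Fin n)
        = ⟨j.1 + 1, by have := j.2; omega⟩ :=
      Equiv.swap_apply_of_ne_of_ne
        (fun h => absurd ((congrArg Fin.val h).trans hp1) (show ¬(j.1 + 1 = i) by omega))
        (fun h => absurd ((congrArg Fin.val h).trans hq1) (show ¬(j.1 + 1 = i + 1) by omega))
    have e0 : Equiv.swap p q (⟨j.1, by have := j.2; omega⟩ : Fin n)
        = ⟨j.1, by have := j.2; omega⟩ :=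
      Equiv.swap_apply_of_ne_of_ne
        (fun h => absurd ((congrArg Fin.val h).trans hp1) (show ¬(j.1 = i) by omega))
        (fun h => absurd ((congrArg Fin.val h).trans hq1) (show ¬(j.1 = i + 1) by omega))
    simp only [Equiv.Perm.mul_apply, Equiv.swap_inv, e1, e0]
    simp only [swapAdjLtIff hp1 hq1 (π ⟨j.1 + 1, by have := j.2; omega⟩)
      (π ⟨j.1, by have := j.2; omega⟩)
      (hboth ⟨j.1 + 1, by have := j.2; omega⟩ ⟨j.1, by have := j.2; omega⟩
        (show j.1 + 1 ≠ i by omega) (show j.1 + 1 ≠ i + 1 by omega)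
        (show j.1 ≠ i by omega) (show j.1 ≠ i + 1 by omega))
      (fun hc => hboth ⟨j.1, by have := j.2; omega⟩ ⟨j.1 + 1, by have := j.2; omega⟩
        (show j.1 ≠ i by omega) (show j.1 ≠ i + 1 by omega)
        (show j.1 + 1 ≠ i by omega) (show j.1 + 1 ≠ i + 1 by omega) ⟨hc.2, hc.1⟩)]
    exact sub_self _
  rw [abs_sub_comm, desEqSum, desEqSum, ← Finset.sum_sub_distrib,
    ← Finset.sum_subset (Finset.subset_univ _) hvan]
  by_cases hL : 1 ≤ i
  · by_cases hRt : i + 2 < n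
    · -- full regime
      have pfA : i - 1 < n - 1 := by omega
      have pfB : i < n - 1 := by omega
      have pfC : i + 1 < n - 1 := by omega
      have pA : i - 1 < n := by omega
      have pP : i - 1 + 1 < n := by omega
      have pP' : i < n := by omega
      have pQ : i + 1 < n := hi
      have pD : i + 1 + 1 < n := by omega
      have hTeq : Finset.univ.filter (fun j : Fin (n-1) => i - 1 ≤ j.1 ∧ j.1 ≤ i + 1) =
          insert ⟨i - 1, pfA⟩ (insert ⟨i, pfB⟩ {(⟨i + 1, pfC⟩ : Fin (n-1))}) := by
        ext j
        simp only [Finset.mem_filter, Finset.mem_univ, true_and, Finset.mem_insert,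
          Finset.mem_singleton, Fin.ext_iff]
        have := j.2
        omega
      rw [hTeq, Finset.sum_insert (by
          simp only [Finset.mem_insert, Finset.mem_singleton, Fin.ext_iff]; omega),
        Finset.sum_insert (by
          simp only [Finset.mem_singleton, Fin.ext_iff]; omega), Finset.sum_singleton]
      show |((if (Equiv.swap p q * π * (Equiv.swap p q)⁻¹) ⟨i - 1 + 1, pP⟩ <
                (Equiv.swap p q * π * (Equiv.swap p q)⁻¹) ⟨i - 1, pA⟩ then (1:ℤ) else 0) -
             (if π ⟨i - 1 + 1, pP⟩ < π ⟨i - 1, pA⟩ then (1:ℤ) else 0)) +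
            (((if (Equiv.swap p q * π * (Equiv.swap p q)⁻¹) ⟨i + 1, pQ⟩ <
                (Equiv.swap p q * π * (Equiv.swap p q)⁻¹) ⟨i, pP'⟩ then (1:ℤ) else 0) -
              (if π ⟨i + 1, pQ⟩ < π ⟨i, pP'⟩ then (1:ℤ) else 0)) +
             ((if (Equiv.swap p q * π * (Equiv.swap p q)⁻¹) ⟨i + 1 + 1, pD⟩ <
                (Equiv.swap p q * π * (Equiv.swap p q)⁻¹) ⟨i + 1, pQ⟩ then (1:ℤ) else 0) -
              (if π ⟨i + 1 + 1, pD⟩ < π ⟨i + 1, pQ⟩ then (1:ℤ) else 0)))| ≤ 1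
      have eP1 : (⟨i - 1 + 1, pP⟩ : Fin n) = p :=
        Fin.val_injective (by rw [hp1]; show i - 1 + 1 = i; omega)
      have eP2 : (⟨i, pP'⟩ : Fin n) = p := Fin.val_injective (by rw [hp1])
      have eQ : (⟨i + 1, pQ⟩ : Fin n) = q := Fin.val_injective (by rw [hq1])
      rw [eP1, eP2, eQ]
      simp only [Equiv.Perm.mul_apply, Equiv.swap_inv, Equiv.swap_apply_left,
        Equiv.swap_apply_right]
      have eA : Equiv.swap p q ⟨i - 1, pA⟩ = ⟨i - 1, pA⟩ :=
        Equiv.swap_apply_of_ne_of_ne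
          (fun h => absurd ((congrArg Fin.val h).trans hp1) (show ¬(i - 1 = i) by omega))
          (fun h => absurd ((congrArg Fin.val h).trans hq1) (show ¬(i - 1 = i + 1) by omega))
      have eD : Equiv.swap p q ⟨i + 1 + 1, pD⟩ = ⟨i + 1 + 1, pD⟩ :=
        Equiv.swap_apply_of_ne_of_ne
          (fun h => absurd ((congrArg Fin.val h).trans hp1) (show ¬(i + 1 + 1 = i) by omega))
          (fun h => absurd ((congrArg Fin.val h).trans hq1) (show ¬(i + 1 + 1 = i + 1) by omega))
      rw [eA, eD]
      simp only [Fin.lt_def]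
      have B := boundaryCore π p q i hp1 hq1 H'
        ((π ⟨i - 1, pA⟩).1) ((π ⟨i + 1 + 1, pD⟩).1)
        ((Equiv.swap p q (π ⟨i - 1, pA⟩)).1) ((Equiv.swap p q (π ⟨i + 1 + 1, pD⟩)).1)
        (if (Equiv.swap p q (π q)).1 < (Equiv.swap p q (π ⟨i - 1, pA⟩)).1 then (1:ℤ) else 0)
        (if (π p).1 < (π ⟨i - 1, pA⟩).1 then (1:ℤ) else 0)
        (if (Equiv.swap p q (π ⟨i + 1 + 1, pD⟩)).1 < (Equiv.swap p q (π p)).1 then (1:ℤ) else 0)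
        (if (π ⟨i + 1 + 1, pD⟩).1 < (π q).1 then (1:ℤ) else 0)
        (swapTri p q (π ⟨i - 1, pA⟩) i hp1 hq1)
        (swapTri p q (π ⟨i + 1 + 1, pD⟩) i hp1 hq1)
        (indSpec _ _) (indSpec _ _) (indSpec _ _) (indSpec _ _)
        (hvne _ _ (by rw [hp1]; show i - 1 ≠ i; omega))
        (hvne _ _ (by rw [hq1]; show i - 1 ≠ i + 1; omega))
        (hvne _ _ (by rw [hp1]; show i ≠ i + 1 + 1; omega))
        (hvne _ _ (by rw [hq1]; show i + 1 ≠ i + 1 + 1; omega))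
        (hvne _ _ (show i - 1 ≠ i + 1 + 1 by omega))
        1 1 (Or.inr rfl) (Or.inr rfl)
      rw [abs_le] at B ⊢
      constructor
      · linarith [B.1]
      · linarith [B.2]
    ·       -- right end missing: i + 2 = n
      have pfA : i - 1 < n - 1 := by omega
      have pfB : i < n - 1 := by omega
      have pA : i - 1 < n := by omega
      have pP : i - 1 + 1 < n := by omega
      have pP' : i < n := by omega
      have pQ : i + 1 < n := hi
      have hTeq : Finset.univ.filter (fun j : Fin (n-1) => i - 1 ≤ j.1 ∧ j.1 ≤ i + 1) =
          insert ⟨i - 1, pfA⟩ {(⟨i, pfB⟩ : Fin (n-1))} := by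
        ext j
        simp only [Finset.mem_filter, Finset.mem_univ, true_and, Finset.mem_insert,
          Finset.mem_singleton, Fin.ext_iff]
        have := j.2
        omega
      rw [hTeq, Finset.sum_insert (by
          simp only [Finset.mem_singleton, Fin.ext_iff]; omega), Finset.sum_singleton]
      show |((if (Equiv.swap p q * π * (Equiv.swap p q)⁻¹) ⟨i - 1 + 1, pP⟩ <
                (Equiv.swap p q * π * (Equiv.swap p q)⁻¹) ⟨i - 1, pA⟩ then (1:ℤ) else 0) -
             (if π ⟨i - 1 + 1, pP⟩ < π ⟨i - 1, pA⟩ then (1:ℤ) else 0)) +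
            ((if (Equiv.swap p q * π * (Equiv.swap p q)⁻¹) ⟨i + 1, pQ⟩ <
                (Equiv.swap p q * π * (Equiv.swap p q)⁻¹) ⟨i, pP'⟩ then (1:ℤ) else 0) -
             (if π ⟨i + 1, pQ⟩ < π ⟨i, pP'⟩ then (1:ℤ) else 0))| ≤ 1
      have eP1 : (⟨i - 1 + 1, pP⟩ : Fin n) = p :=
        Fin.val_injective (by rw [hp1]; show i - 1 + 1 = i; omega)
      have eP2 : (⟨i, pP'⟩ : Fin n) = p := Fin.val_injective (by rw [hp1])
      have eQ : (⟨i + 1, pQ⟩ : Fin n) = q := Fin.val_injective (by rw [hq1])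
      rw [eP1, eP2, eQ]
      simp only [Equiv.Perm.mul_apply, Equiv.swap_inv, Equiv.swap_apply_left,
        Equiv.swap_apply_right]
      have eA : Equiv.swap p q ⟨i - 1, pA⟩ = ⟨i - 1, pA⟩ :=
        Equiv.swap_apply_of_ne_of_ne
          (fun h => absurd ((congrArg Fin.val h).trans hp1) (show ¬(i - 1 = i) by omega))
          (fun h => absurd ((congrArg Fin.val h).trans hq1) (show ¬(i - 1 = i + 1) by omega))
      rw [eA]
      simp only [Fin.lt_def]
      have B := boundaryCore π p q i hp1 hq1 H'
        ((π ⟨i - 1, pA⟩).1) (n + 1)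
        ((Equiv.swap p q (π ⟨i - 1, pA⟩)).1) (n + 1)
        (if (Equiv.swap p q (π q)).1 < (Equiv.swap p q (π ⟨i - 1, pA⟩)).1 then (1:ℤ) else 0)
        (if (π p).1 < (π ⟨i - 1, pA⟩).1 then (1:ℤ) else 0)
        0 0
        (swapTri p q (π ⟨i - 1, pA⟩) i hp1 hq1)
        (Or.inr (Or.inr ⟨by omega, by omega, rfl⟩))
        (indSpec _ _) (indSpec _ _)
        (Or.inr ⟨by have := (Equiv.swap p q (π p)).2; omega, rfl⟩)
        (Or.inr ⟨by have := (π q).2; omega, rfl⟩)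
        (hvne _ _ (by rw [hp1]; show i - 1 ≠ i; omega))
        (hvne _ _ (by rw [hq1]; show i - 1 ≠ i + 1; omega))
        (by have := (π p).2; omega)
        (by have := (π q).2; omega)
        (by have := (π ⟨i - 1, pA⟩).2; omega)
        1 0 (Or.inr rfl) (Or.inl rfl)
      rw [abs_le] at B ⊢
      constructor
      · linarith [B.1]
      · linarith [B.2]
  · by_cases hRt : i + 2 < n
    · -- left end missing: i = 0
      have pfB : i < n - 1 := by omega
      have pfC : i + 1 < n - 1 := by omega
      have pP' : i < n := by omega
      have pQ : i + 1 < n := hi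
      have pD : i + 1 + 1 < n := by omega
      have hTeq : Finset.univ.filter (fun j : Fin (n-1) => i - 1 ≤ j.1 ∧ j.1 ≤ i + 1) =
          insert ⟨i, pfB⟩ {(⟨i + 1, pfC⟩ : Fin (n-1))} := by
        ext j
        simp only [Finset.mem_filter, Finset.mem_univ, true_and, Finset.mem_insert,
          Finset.mem_singleton, Fin.ext_iff]
        have := j.2
        omega
      rw [hTeq, Finset.sum_insert (by
          simp only [Finset.mem_singleton, Fin.ext_iff]; omega), Finset.sum_singleton]
      show |((if (Equiv.swap p q * π * (Equiv.swap p q)⁻¹) ⟨i + 1, pQ⟩ <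
                (Equiv.swap p q * π * (Equiv.swap p q)⁻¹) ⟨i, pP'⟩ then (1:ℤ) else 0) -
             (if π ⟨i + 1, pQ⟩ < π ⟨i, pP'⟩ then (1:ℤ) else 0)) +
            ((if (Equiv.swap p q * π * (Equiv.swap p q)⁻¹) ⟨i + 1 + 1, pD⟩ <
                (Equiv.swap p q * π * (Equiv.swap p q)⁻¹) ⟨i + 1, pQ⟩ then (1:ℤ) else 0) -
             (if π ⟨i + 1 + 1, pD⟩ < π ⟨i + 1, pQ⟩ then (1:ℤ) else 0))| ≤ 1
      have eP2 : (⟨i, pP'⟩ : Fin n) = p := Fin.val_injective (by rw [hp1])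
      have eQ : (⟨i + 1, pQ⟩ : Fin n) = q := Fin.val_injective (by rw [hq1])
      rw [eP2, eQ]
      simp only [Equiv.Perm.mul_apply, Equiv.swap_inv, Equiv.swap_apply_left,
        Equiv.swap_apply_right]
      have eD : Equiv.swap p q ⟨i + 1 + 1, pD⟩ = ⟨i + 1 + 1, pD⟩ :=
        Equiv.swap_apply_of_ne_of_ne
          (fun h => absurd ((congrArg Fin.val h).trans hp1) (show ¬(i + 1 + 1 = i) by omega))
          (fun h => absurd ((congrArg Fin.val h).trans hq1) (show ¬(i + 1 + 1 = i + 1) by omega))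
      rw [eD]
      simp only [Fin.lt_def]
      have B := boundaryCore π p q i hp1 hq1 H'
        n ((π ⟨i + 1 + 1, pD⟩).1)
        n ((Equiv.swap p q (π ⟨i + 1 + 1, pD⟩)).1)
        1 1
        (if (Equiv.swap p q (π ⟨i + 1 + 1, pD⟩)).1 < (Equiv.swap p q (π p)).1 then (1:ℤ) else 0)
        (if (π ⟨i + 1 + 1, pD⟩).1 < (π q).1 then (1:ℤ) else 0)
        (Or.inr (Or.inr ⟨by omega, by omega, rfl⟩))
        (swapTri p q (π ⟨i + 1 + 1, pD⟩) i hp1 hq1)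
        (Or.inl ⟨(Equiv.swap p q (π q)).2, rfl⟩)
        (Or.inl ⟨(π p).2, rfl⟩)
        (indSpec _ _) (indSpec _ _)
        (by have := (π p).2; omega)
        (by have := (π q).2; omega)
        (hvne _ _ (by rw [hp1]; show i ≠ i + 1 + 1; omega))
        (hvne _ _ (by rw [hq1]; show i + 1 ≠ i + 1 + 1; omega))
        (by have := (π ⟨i + 1 + 1, pD⟩).2; omega)
        0 1 (Or.inl rfl) (Or.inr rfl)
      rw [abs_le] at B ⊢
      constructor
      · linarith [B.1]
      · linarith [B.2]
    · -- both ends missing: i = 0, n = 2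
      have pfB : i < n - 1 := by omega
      have pP' : i < n := by omega
      have pQ : i + 1 < n := hi
      have hTeq : Finset.univ.filter (fun j : Fin (n-1) => i - 1 ≤ j.1 ∧ j.1 ≤ i + 1) =
          {(⟨i, pfB⟩ : Fin (n-1))} := by
        ext j
        simp only [Finset.mem_filter, Finset.mem_univ, true_and, Finset.mem_singleton,
          Fin.ext_iff]
        have := j.2
        omega
      rw [hTeq, Finset.sum_singleton]
      show |(if (Equiv.swap p q * π * (Equiv.swap p q)⁻¹) ⟨i + 1, pQ⟩ <
                (Equiv.swap p q * π * (Equiv.swap p q)⁻¹) ⟨i, pP'⟩ then (1:ℤ) else 0) -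
             (if π ⟨i + 1, pQ⟩ < π ⟨i, pP'⟩ then (1:ℤ) else 0)| ≤ 1
      have eP2 : (⟨i, pP'⟩ : Fin n) = p := Fin.val_injective (by rw [hp1])
      have eQ : (⟨i + 1, pQ⟩ : Fin n) = q := Fin.val_injective (by rw [hq1])
      rw [eP2, eQ]
      simp only [Equiv.Perm.mul_apply, Equiv.swap_inv, Equiv.swap_apply_left,
        Equiv.swap_apply_right]
      simp only [Fin.lt_def]
      have B := boundaryCore π p q i hp1 hq1 H'
        n (n + 1) n (n + 1)
        1 1 0 0
        (Or.inr (Or.inr ⟨by omega, by omega, rfl⟩))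
        (Or.inr (Or.inr ⟨by omega, by omega, rfl⟩))
        (Or.inl ⟨(Equiv.swap p q (π q)).2, rfl⟩)
        (Or.inl ⟨(π p).2, rfl⟩)
        (Or.inr ⟨by have := (Equiv.swap p q (π p)).2; omega, rfl⟩)
        (Or.inr ⟨by have := (π q).2; omega, rfl⟩)
        (by have := (π p).2; omega)
        (by have := (π q).2; omega)
        (by have := (π p).2; omega)
        (by have := (π q).2; omega)
        (by omega)
        0 0 (Or.inl rfl) (Or.inl rfl)
      rw [abs_le] at B ⊢
      constructor
      · linarith [B.1]
      · linarith [B.2]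
end
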